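/- There is an exact sequence 0 → ℤ_p → ℤ_p[[T]]^{ψ=id} →^{1-φ} ℤ_p[[T]]^{ψ=0} → ℤ_p → 0, where the first map is the inclusion of constants, and the last map is evaluation at T = 0. -/

import Mathlib

open PowerSeries

variable (p : ℕ) [Fact p.Prime]

/-- `hφ` characterizes the operator `φ(f)(T) = f((1+T)^p - 1)` on `ℤ_p[[T]]`. -/
def IsFrobenius (φ : PowerSeries ℤ_[p] →+* PowerSeries ℤ_[p]) : Prop :=
  ∀ (f : PowerSeries ℤ_[p]) (n : ℕ),
    PowerSeries.coeff n (φ f) =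
      PowerSeries.coeff n
        (Polynomial.eval₂ (PowerSeries.C) ((1 + PowerSeries.X) ^ p - 1)
          (PowerSeries.trunc (n + 1) f))

/-- `ψ` is the trace-type operator on `ℤ_p[[T]]`, satisfying
`φ∘ψ(f)(T) = p⁻¹ Σ_{ξ ∈ μ_p} f(ξ(1+T) - 1)`; equivalently `ψ = p⁻¹ φ⁻¹ ∘ Tr` for the
degree-`p` extension `ℤ_p[[T]] / φ(ℤ_p[[T]])`, i.e. `p·ψ(f) = Tr(f)`. -/
def IsPsi (φ : PowerSeries ℤ_[p] →+* PowerSeries ℤ_[p])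
    (ψ : PowerSeries ℤ_[p] → PowerSeries ℤ_[p]) : Prop :=
  ∀ f : PowerSeries ℤ_[p],
    (p : PowerSeries ℤ_[p]) * ψ f =
      @Algebra.trace (PowerSeries ℤ_[p]) (PowerSeries ℤ_[p]) _ _ φ.toAlgebra f

/-!
Write `P = (1+T)^p - 1 = pT + ⋯ + T^p`. The `n`-th coefficient of `φ f` is
`∑_{m ≤ n} f_m [T^n] P^m`, where `T^m ∣ P^m`, `[T^m] P^m = p^m` and `P ≡ T^p mod p`. Hence `φ` fixes
`ℤ_p`, is continuous for the coefficientwise topology, and reduces mod `p` to `f(T) ↦ f(T^p)`.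

Mod `p` this makes `(g_i)_{i<p} ↦ ∑ φ(g_i) T^i` bijective. Over `ℤ_p`, injectivity follows by
dividing by `p` repeatedly, and surjectivity because the image is `p`-adically dense and, by
compactness of `ℤ_p[[T]]`, closed. So `ℤ_p[[T]]` is free over `φ` on `T^i`, hence also on `u^i`
with `u = 1 + T`. As `u^p = φ(u)`, multiplication by `u` has zero diagonal in that basis, so
`Tr(1+T) = 0`, while `Tr(φ h) = p h`. Thus `ψ ∘ φ = id` and `ψ(a(1+T)) = 0`.

In the middle, `φ f = f` gives `(1 - p^n) f_n = 0` for `n ≥ 1`. If `g(0) = 0` then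
`p^k ∣ p^n [T^n] φ^k g`, so `φ^k g → 0`, and `g = (1-φ)(∑_{j<k} φ^j g) + φ^k g` lies in the
closed image of `1 - φ`.
-/

open Filter Topology
open scoped PowerSeries.WithPiTopology

theorem Continuous.mem_range_of_tendsto {α β : Type*} [TopologicalSpace α] [CompactSpace α]
    [TopologicalSpace β] [T2Space β] {F : α → β} (hF : Continuous F) {u : ℕ → α} {y : β}
    (h : Tendsto (F ∘ u) atTop (𝓝 y)) : y ∈ Set.range F :=
  (isCompact_range hF).isClosed.mem_of_tendsto h (.of_forall fun k => ⟨u k, rfl⟩)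

namespace PowerSeries.WithPiTopology

variable {R : Type*}

instance [TopologicalSpace R] [CompactSpace R] : CompactSpace R⟦X⟧ :=
  inferInstanceAs (CompactSpace ((Unit →₀ ℕ) → R))

theorem continuous_of_continuous_coeff [TopologicalSpace R] [Semiring R] {α : Type*}
    [TopologicalSpace α] {F : α → R⟦X⟧} (h : ∀ n, Continuous fun a => coeff n (F a)) :
    Continuous F :=
  continuous_iff_continuousAt.2 fun _ =>
    (tendsto_iff_coeff_tendsto _ _ _ _).2 fun n => (h n).continuousAt

end PowerSeries.WithPiTopology

section Algebra

open Module

variable {R S : Type*} [CommRing R] [CommRing S] [Algebra R S] {n : ℕ}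

theorem Algebra.trace_algebraMap_mul (c : R) (y : S) :
    Algebra.trace R S (algebraMap R S c * y) = c * Algebra.trace R S y := by
  rw [← Algebra.smul_def, map_smul, smul_eq_mul]

theorem Algebra.exists_basis_eq_pow (x : S)
    (hli : ∀ g : Fin n → R, ∑ i, algebraMap R S (g i) * x ^ (i : ℕ) = 0 → g = 0)
    (hspan : ∀ y : S, ∃ g : Fin n → R, ∑ i, algebraMap R S (g i) * x ^ (i : ℕ) = y) :
    ∃ b : Basis (Fin n) R S, ∀ i, b i = x ^ (i : ℕ) := by
  have hcomb (g : Fin n → R) : Fintype.linearCombination R (fun i : Fin n => x ^ (i : ℕ)) g =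
      ∑ i, algebraMap R S (g i) * x ^ (i : ℕ) := by
    simp [Fintype.linearCombination_apply, Algebra.smul_def]
  have hli' : LinearIndependent R fun i : Fin n => x ^ (i : ℕ) := by
    rw [linearIndependent_iff_injective_fintypeLinearCombination, injective_iff_map_eq_zero]
    exact fun g hg => hli g (by rwa [← hcomb])
  have hspan' : ⊤ ≤ Submodule.span R (Set.range fun i : Fin n => x ^ (i : ℕ)) := by
    rw [← Fintype.range_linearCombination]
    rintro y -
    obtain ⟨g, rfl⟩ := hspan y
    exact ⟨g, hcomb g⟩
  exact ⟨Basis.mk hli' hspan', Basis.mk_apply hli' hspan'⟩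

theorem Module.Basis.exists_basis_eq_pow_add_algebraMap [Nontrivial R] (b : Basis (Fin n) R S)
    {x : S} (hb : ∀ i, b i = x ^ (i : ℕ)) (r : R) :
    ∃ b' : Basis (Fin n) R S, ∀ i, b' i = (x + algebraMap R S r) ^ (i : ℕ) := by
  set y := x + algebraMap R S r
  have hspan : ⊤ ≤ Submodule.span R (Set.range fun i : Fin n => y ^ (i : ℕ)) := by
    rw [← b.span_eq, Submodule.span_le]
    rintro _ ⟨j, rfl⟩
    rw [hb, show x = y + algebraMap R S (-r) by simp [y], add_pow]
    refine Submodule.sum_mem _ fun k hk => ?_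
    have hkn : k < n := by have := Finset.mem_range.1 hk; omega
    rw [show y ^ k * algebraMap R S (-r) ^ (j - k) * ((j : ℕ).choose k : S) =
        ((-r) ^ ((j : ℕ) - k) * (j : ℕ).choose k : R) • y ^ k by rw [Algebra.smul_def]; simp; ring]
    exact Submodule.smul_mem _ _ (Submodule.subset_span ⟨⟨k, hkn⟩, rfl⟩)
  exact ⟨basisOfTopLeSpanOfCardEqFinrank _ hspan (by simp [finrank_eq_card_basis b]),
    fun i => by simp⟩

theorem Algebra.trace_eq_zero_of_basis_eq_pow (hn : 1 < n) (b : Basis (Fin n) R S) {u : S}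
    (hb : ∀ i, b i = u ^ (i : ℕ)) {c : R} (hu : u ^ n = algebraMap R S c) :
    Algebra.trace R S u = 0 := by
  rw [Algebra.trace_eq_matrix_trace b, Matrix.trace]
  refine Finset.sum_eq_zero fun i _ => ?_
  rw [Matrix.diag_apply, Algebra.leftMulMatrix_eq_repr_mul, hb, ← pow_succ']
  by_cases hi : (i : ℕ) + 1 < n
  · rw [← hb ⟨_, hi⟩, b.repr_self, Finsupp.single_apply, if_neg (by simp [Fin.ext_iff])]
  · have hi0 : (i : ℕ) ≠ 0 := by omega
    rw [show (i : ℕ) + 1 = n by omega, hu, Algebra.algebraMap_eq_smul_one,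
      show (1 : S) = b ⟨0, by omega⟩ by simp [hb], map_smul, b.repr_self,
      Finsupp.smul_apply, Finsupp.single_apply, if_neg (by simp [Fin.ext_iff, Ne.symm hi0]),
      smul_zero]

end Algebra

noncomputable def phiX : PowerSeries ℤ_[p] := (1 + X) ^ p - 1

section

variable {p}

theorem PadicInt.tendsto_atTop_zero_of_pow_dvd_pow_mul {x : ℕ → ℤ_[p]} (n : ℕ)
    (h : ∀ k, (p : ℤ_[p]) ^ k ∣ p ^ n * x k) : Tendsto x atTop (𝓝 0) := by
  have hp : (0 : ℝ) < p := by exact_mod_cast (Fact.out : p.Prime).pos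
  have bound : ∀ k, ‖x k‖ ≤ (p : ℝ) ^ n * (p : ℝ)⁻¹ ^ k := by
    intro k
    obtain ⟨y, hy⟩ := h k
    have hnorm := congrArg norm hy
    simp only [norm_mul, PadicInt.norm_p_pow, zpow_neg, zpow_natCast] at hnorm
    calc ‖x k‖ = (p : ℝ) ^ n * ((p : ℝ) ^ k)⁻¹ * ‖y‖ := by
          rw [mul_assoc, ← hnorm, mul_inv_cancel_left₀ (by positivity)]
      _ ≤ (p : ℝ) ^ n * (p : ℝ)⁻¹ ^ k := by
          rw [inv_pow]
          exact mul_le_of_le_one_right (by positivity) (PadicInt.norm_le_one y)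
  refine squeeze_zero_norm bound ?_
  simpa using (tendsto_pow_atTop_nhds_zero_of_lt_one (by positivity)
    (inv_lt_one_of_one_lt₀ (by exact_mod_cast (Fact.out : p.Prime).one_lt))).const_mul
    ((p : ℝ) ^ n)

theorem PowerSeries.tendsto_atTop_zero_of_pow_dvd_pow_mul_coeff {F : ℕ → PowerSeries ℤ_[p]}
    (h : ∀ k n, (p : ℤ_[p]) ^ k ∣ p ^ n * coeff n (F k)) :
    Tendsto F atTop (𝓝 0) :=
  (WithPiTopology.tendsto_iff_coeff_tendsto _ _ _ _).2 fun n => by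
    simpa using PadicInt.tendsto_atTop_zero_of_pow_dvd_pow_mul n (h · n)

variable (p) in
theorem PowerSeries.natCast_ne_zero : (p : PowerSeries ℤ_[p]) ≠ 0 := by
  rw [← map_natCast C, Ne, map_eq_zero_iff _ C_injective]
  exact_mod_cast (Fact.out : p.Prime).ne_zero

theorem PowerSeries.exists_eq_smul_of_map_toZMod_eq_zero {F : PowerSeries ℤ_[p]}
    (h : map PadicInt.toZMod F = 0) : ∃ G, F = (p : ℤ_[p]) • G := by
  have hdvd (n : ℕ) : (p : ℤ_[p]) ∣ coeff n F := by
    rw [← Ideal.mem_span_singleton, ← PadicInt.maximalIdeal_eq_span_p, ← PadicInt.ker_toZMod,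
      RingHom.mem_ker, ← coeff_map, h, map_zero]
  choose G hG using hdvd
  exact ⟨mk G, by ext n; simp [hG n]⟩

theorem constantCoeff_phiX : constantCoeff (phiX p) = 0 := by
  simp [phiX]

theorem coeff_one_phiX : coeff 1 (phiX p) = p := by
  have : (1 + X) ^ p = (((1 + Polynomial.X) ^ p : Polynomial ℤ_[p]) : PowerSeries ℤ_[p]) := by
    simp
  rw [phiX, map_sub, this, Polynomial.coeff_coe, Polynomial.coeff_one_add_X_pow]
  simp

theorem coeff_phiX_pow {m n : ℕ} (h : n ≤ m) :
    coeff n (phiX p ^ m) = if n = m then (p : ℤ_[p]) ^ m else 0 := by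
  obtain ⟨U, hU⟩ := X_dvd_iff.2 (constantCoeff_phiX (p := p))
  have hU0 : constantCoeff U = p := by
    rw [← coeff_one_phiX, hU, coeff_succ_X_mul, coeff_zero_eq_constantCoeff]
  rw [hU, mul_pow, coeff_X_pow_mul']
  split_ifs with h1 h2 h2
  · subst h2; simp [hU0]
  · omega
  · omega
  · rfl

theorem map_toZMod_phiX : map PadicInt.toZMod (phiX p) = X ^ p := by
  have : CharP (PowerSeries (ZMod p)) p :=
    charP_of_injective_algebraMap (algebraMap (ZMod p) _).injective p
  simp [phiX, add_pow_char]

noncomputable def phiCombination (φ : PowerSeries ℤ_[p] →+* PowerSeries ℤ_[p])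
    (g : Fin p → PowerSeries ℤ_[p]) : PowerSeries ℤ_[p] :=
  ∑ i, φ (g i) * X ^ (i : ℕ)

noncomputable def phiDigits (f : PowerSeries ℤ_[p]) (i : Fin p) : PowerSeries ℤ_[p] :=
  mk fun m => coeff (p * m + i) f

theorem phiCombination_add (φ : PowerSeries ℤ_[p] →+* PowerSeries ℤ_[p])
    (g g' : Fin p → PowerSeries ℤ_[p]) :
    phiCombination φ (g + g') = phiCombination φ g + phiCombination φ g' := by
  simp [phiCombination, add_mul, Finset.sum_add_distrib]

end

namespace IsFrobenius

variable {p} {φ : PowerSeries ℤ_[p] →+* PowerSeries ℤ_[p]} (hφ : IsFrobenius p φ)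
include hφ

theorem coeff_apply (f : PowerSeries ℤ_[p]) (n : ℕ) :
    coeff n (φ f) = ∑ m ∈ Finset.range (n + 1), coeff m f * coeff n (phiX p ^ m) := by
  rw [hφ f n, Polynomial.eval₂_eq_sum_range' C (natDegree_trunc_lt f n), map_sum]
  refine Finset.sum_congr rfl fun m hm => ?_
  rw [coeff_trunc, if_pos (Finset.mem_range.1 hm), coeff_C_mul, phiX]

theorem continuous : Continuous φ := by
  refine WithPiTopology.continuous_of_continuous_coeff fun n => ?_
  simp_rw [hφ.coeff_apply]
  exact continuous_finsetSum _ fun m _ =>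
    (WithPiTopology.continuous_coeff _ m).mul continuous_const

theorem map_C (a : ℤ_[p]) : φ (C a) = C a := by
  ext n
  rw [hφ.coeff_apply, Finset.sum_eq_single 0 (fun m _ hm => by simp [coeff_C, hm]) (by simp)]
  simp [coeff_C, coeff_one]

theorem map_smul (a : ℤ_[p]) (f : PowerSeries ℤ_[p]) : φ (a • f) = a • φ f := by
  rw [smul_eq_C_mul, smul_eq_C_mul, map_mul, hφ.map_C]

theorem constantCoeff_apply (f : PowerSeries ℤ_[p]) : constantCoeff (φ f) = constantCoeff f := by
  rw [← coeff_zero_eq_constantCoeff_apply, hφ.coeff_apply]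
  simp

theorem apply_X : φ X = phiX p := by
  ext n
  rw [hφ.coeff_apply]
  rcases Nat.eq_zero_or_pos n with rfl | hn
  · simp [constantCoeff_phiX]
  · rw [Finset.sum_eq_single 1 (fun m _ hm => by simp [coeff_X, hm]) (by simp; omega)]
    simp

theorem map_toZMod (f : PowerSeries ℤ_[p]) :
    map PadicInt.toZMod (φ f) =
      expand p (Fact.out : p.Prime).ne_zero (map PadicInt.toZMod f) := by
  ext n
  simp only [coeff_map, hφ.coeff_apply, map_sum, map_mul]
  simp_rw [← coeff_map, map_pow, map_toZMod_phiX, ← pow_mul, coeff_X_pow, coeff_expand]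
  have hp := (Fact.out : p.Prime).pos
  split_ifs with h
  · obtain ⟨q, rfl⟩ := h
    rw [Nat.mul_div_cancel_left _ hp, Finset.sum_eq_single q]
    · simp
    · intro m _ hm
      simp [Nat.mul_left_cancel_iff hp, Ne.symm hm]
    · intro hq
      exact (hq (Finset.mem_range.2 (Nat.lt_succ_of_le (Nat.le_mul_of_pos_left q hp)))).elim
  · exact Finset.sum_eq_zero fun m _ => by rw [if_neg fun h' => h ⟨m, h'⟩, mul_zero]

theorem eq_C_of_apply_eq {f : PowerSeries ℤ_[p]} (h : φ f = f) : f = C (constantCoeff f) := by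
  suffices hf : ∀ n, 0 < n → coeff n f = 0 by
    ext n
    rcases n.eq_zero_or_pos with rfl | hn
    · simp
    · rw [hf n hn, coeff_C, if_neg hn.ne']
  intro n
  induction n using Nat.strong_induction_on with
  | _ n ih =>
    intro hn
    have hfix : coeff n f = coeff n f * p ^ n := by
      conv_lhs => rw [← h]
      rw [hφ.coeff_apply, Finset.sum_eq_single n _ (by simp), coeff_phiX_pow le_rfl, if_pos rfl]
      intro m hm hmn
      rcases m.eq_zero_or_pos with rfl | hm0
      · simp [coeff_one, hn.ne']
      · rw [ih m (by have := Finset.mem_range.1 hm; omega) hm0, zero_mul]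
    have hpn : (p : ℤ_[p]) ^ n ≠ 1 := by
      exact_mod_cast (Nat.one_lt_pow hn.ne' (Fact.out : p.Prime).one_lt).ne'
    have : coeff n f * (1 - p ^ n) = 0 := by linear_combination hfix
    exact (mul_eq_zero.1 this).resolve_right (sub_ne_zero.2 hpn.symm)

theorem pow_dvd_pow_mul_coeff_iterate {g : PowerSeries ℤ_[p]} (hg : constantCoeff g = 0)
    (k n : ℕ) : (p : ℤ_[p]) ^ k ∣ p ^ n * coeff n (φ^[k] g) := by
  have hg' : ∀ k, coeff 0 (φ^[k] g) = 0 := fun k => by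
    rw [coeff_zero_eq_constantCoeff_apply, ← hg]
    induction k with
    | zero => rfl
    | succ k ih => rw [Function.iterate_succ_apply', hφ.constantCoeff_apply, ih]
  induction k generalizing n with
  | zero => exact one_dvd _
  | succ k ih =>
    rw [Function.iterate_succ_apply', hφ.coeff_apply, Finset.mul_sum, pow_succ]
    refine Finset.dvd_sum fun m hm => ?_
    have hmn : m ≤ n := Nat.lt_succ_iff.1 (Finset.mem_range.1 hm)
    rcases m.eq_zero_or_pos with rfl | hm0
    · simp [hg']
    have hP : (p : ℤ_[p]) ∣ p ^ (n - m) * coeff n (phiX p ^ m) := by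
      rcases hmn.lt_or_eq with hlt | rfl
      · exact dvd_mul_of_dvd_left (dvd_pow_self _ (by omega)) _
      · rw [coeff_phiX_pow le_rfl, if_pos rfl]
        exact dvd_mul_of_dvd_right (dvd_pow_self _ hm0.ne') _
    calc _ ∣ (p ^ m * coeff m (φ^[k] g)) * (p ^ (n - m) * coeff n (phiX p ^ m)) :=
          mul_dvd_mul (ih m) hP
      _ = p ^ n * (coeff m (φ^[k] g) * coeff n (phiX p ^ m)) := by
          rw [← Nat.sub_add_cancel hmn, pow_add, Nat.add_sub_cancel]
          ring

theorem exists_sub_apply_eq {g : PowerSeries ℤ_[p]} (hg : constantCoeff g = 0) :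
    ∃ f, f - φ f = g := by
  have partial_sums (k : ℕ) :
      ∑ j ∈ Finset.range k, φ^[j] g - φ (∑ j ∈ Finset.range k, φ^[j] g) = g - φ^[k] g := by
    simp only [map_sum, ← Function.iterate_succ_apply' φ]
    rw [← Finset.sum_sub_distrib, Finset.sum_range_sub']
    rfl
  have hlim : Tendsto (fun k => g - φ^[k] g) atTop (𝓝 g) := by
    simpa using (tendsto_atTop_zero_of_pow_dvd_pow_mul_coeff
      (hφ.pow_dvd_pow_mul_coeff_iterate hg)).const_sub g
  exact (continuous_id.sub hφ.continuous).mem_range_of_tendsto (F := fun f => f - φ f)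
    (u := fun k => ∑ j ∈ Finset.range k, φ^[j] g)
    (by simpa only [Function.comp_def, partial_sums] using hlim)

theorem continuous_phiCombination : Continuous (phiCombination φ) :=
  continuous_finsetSum _ fun i _ => (hφ.continuous.comp (continuous_apply i)).mul continuous_const

theorem phiCombination_smul (a : ℤ_[p]) (g : Fin p → PowerSeries ℤ_[p]) :
    phiCombination φ (a • g) = a • phiCombination φ g := by
  simp [phiCombination, hφ.map_smul, Finset.smul_sum]

theorem coeff_map_toZMod_phiCombination (g : Fin p → PowerSeries ℤ_[p]) (m : ℕ) (i : Fin p) :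
    coeff (p * m + i) (map PadicInt.toZMod (phiCombination φ g)) =
      PadicInt.toZMod (coeff m (g i)) := by
  simp only [phiCombination, map_sum, map_mul, hφ.map_toZMod, map_pow, map_X]
  rw [Finset.sum_eq_single i _ (by simp), coeff_mul_X_pow, coeff_expand_mul, coeff_map]
  intro j _ hji
  rw [coeff_mul_X_pow']
  split_ifs with hj
  · refine coeff_expand_of_not_dvd _ _ _ fun ⟨c, hc⟩ => hji (Fin.ext ?_)
    have := congrArg (· % p) (show p * m + i = p * c + j by omega)
    simpa [Nat.mul_add_mod, Nat.mod_eq_of_lt] using this.symm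
  · rfl

theorem map_toZMod_phiCombination_phiDigits (f : PowerSeries ℤ_[p]) :
    map PadicInt.toZMod (phiCombination φ (phiDigits f)) = map PadicInt.toZMod f := by
  ext n
  have hi : n % p < p := Nat.mod_lt n (Fact.out : p.Prime).pos
  have := hφ.coeff_map_toZMod_phiCombination (phiDigits f) (n / p) ⟨n % p, hi⟩
  rwa [Nat.div_add_mod, phiDigits, coeff_mk, Nat.div_add_mod, ← coeff_map] at this

theorem phiCombination_eq_zero {g : Fin p → PowerSeries ℤ_[p]} (h : phiCombination φ g = 0) :
    g = 0 := by
  have pow_dvd (k : ℕ) : ∀ g : Fin p → PowerSeries ℤ_[p], phiCombination φ g = 0 →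
      ∀ i n, (p : ℤ_[p]) ^ k ∣ coeff n (g i) := by
    induction k with
    | zero => simp
    | succ k ih =>
      intro g h i n
      have hred (i : Fin p) : map PadicInt.toZMod (g i) = 0 := by
        ext m
        rw [coeff_map, ← hφ.coeff_map_toZMod_phiCombination g m i, h]
        simp
      choose G hG using fun i => exists_eq_smul_of_map_toZMod_eq_zero (hred i)
      have hG0 : phiCombination φ G = 0 := by
        rw [show g = (p : ℤ_[p]) • G from funext hG, hφ.phiCombination_smul, smul_eq_C_mul,
          map_natCast] at h
        exact (mul_eq_zero.1 h).resolve_left (natCast_ne_zero p)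
      rw [hG i, coeff_smul, pow_succ']
      exact mul_dvd_mul_left _ (ih G hG0 i n)
  funext i
  ext n
  exact tendsto_nhds_unique tendsto_const_nhds
    (PadicInt.tendsto_atTop_zero_of_pow_dvd_pow_mul 0 fun k => by simpa using pow_dvd k g h i n)

theorem phiCombination_surjective : Function.Surjective (phiCombination φ) := by
  intro f
  have approx (k : ℕ) : ∃ g h, f = phiCombination φ g + (p : ℤ_[p]) ^ k • h := by
    induction k with
    | zero => exact ⟨0, f, by simp [phiCombination]⟩
    | succ k ih =>
      obtain ⟨g, h, hf⟩ := ih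
      obtain ⟨h', hh'⟩ := exists_eq_smul_of_map_toZMod_eq_zero
        (F := h - phiCombination φ (phiDigits h))
        (by rw [map_sub, hφ.map_toZMod_phiCombination_phiDigits, sub_self])
      refine ⟨g + (p : ℤ_[p]) ^ k • phiDigits h, h', ?_⟩
      rw [phiCombination_add, hφ.phiCombination_smul, pow_succ, mul_smul, ← hh', hf, smul_sub]
      abel
  choose g h hf using approx
  refine hφ.continuous_phiCombination.mem_range_of_tendsto (u := g) ?_
  have hlim : Tendsto (fun k => (p : ℤ_[p]) ^ k • h k) atTop (𝓝 0) :=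
    tendsto_atTop_zero_of_pow_dvd_pow_mul_coeff fun k n => by
      rw [coeff_smul]; exact dvd_mul_of_dvd_right (dvd_mul_right _ _) _
  simpa [Function.comp_def, ← sub_eq_iff_eq_add.2 (hf _)] using hlim.const_sub f

theorem trace_apply (f : PowerSeries ℤ_[p]) :
    @Algebra.trace _ _ _ _ φ.toAlgebra (φ f) = p * f := by
  let := φ.toAlgebra
  obtain ⟨b, -⟩ := Algebra.exists_basis_eq_pow X (fun _ => hφ.phiCombination_eq_zero)
    hφ.phiCombination_surjective
  rw [← RingHom.algebraMap_toAlgebra φ, Algebra.trace_algebraMap_of_basis b, Fintype.card_fin,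
    nsmul_eq_mul]

theorem trace_one_add_X : @Algebra.trace _ _ _ _ φ.toAlgebra (1 + X) = 0 := by
  let := φ.toAlgebra
  obtain ⟨b, hb⟩ := Algebra.exists_basis_eq_pow X (fun _ => hφ.phiCombination_eq_zero)
    hφ.phiCombination_surjective
  obtain ⟨b', hb'⟩ := b.exists_basis_eq_pow_add_algebraMap hb 1
  rw [show (1 + X : PowerSeries ℤ_[p]) = X + algebraMap (PowerSeries ℤ_[p]) _ 1 by
    rw [map_one, add_comm]]
  refine Algebra.trace_eq_zero_of_basis_eq_pow (Fact.out : p.Prime).one_lt b' hb' (c := X + 1) ?_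
  simp only [RingHom.algebraMap_toAlgebra, map_add, map_one, hφ.apply_X, phiX]
  ring

end IsFrobenius

namespace IsPsi

variable {p} {φ : PowerSeries ℤ_[p] →+* PowerSeries ℤ_[p]}
  {ψ : PowerSeries ℤ_[p] → PowerSeries ℤ_[p]} (hψ : IsPsi p φ ψ)
include hψ

theorem map_sub (f g : PowerSeries ℤ_[p]) : ψ (f - g) = ψ f - ψ g :=
  mul_left_cancel₀ (natCast_ne_zero p) (by rw [hψ, _root_.map_sub, ← hψ, ← hψ, mul_sub])

theorem apply_phi (hφ : IsFrobenius p φ) (f : PowerSeries ℤ_[p]) : ψ (φ f) = f :=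
  mul_left_cancel₀ (natCast_ne_zero p) (by rw [hψ, hφ.trace_apply])

theorem apply_C_mul_one_add_X (hφ : IsFrobenius p φ) (a : ℤ_[p]) : ψ (C a * (1 + X)) = 0 := by
  refine mul_left_cancel₀ (natCast_ne_zero p) ?_
  let := φ.toAlgebra
  have := Algebra.trace_algebraMap_mul (C a) (1 + X : PowerSeries ℤ_[p])
  rw [RingHom.algebraMap_toAlgebra, hφ.map_C, hφ.trace_one_add_X, mul_zero] at this
  rw [hψ, this, mul_zero]

end IsPsi

/-- **The fundamental exact sequence.**
There is an exact sequence
`0 → ℤ_p → ℤ_p[[T]]^{ψ=id} --(1-φ)--> ℤ_p[[T]]^{ψ=0} → ℤ_p → 0`,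
where the first map is the inclusion of constants and the last map is evaluation at `T = 0`. -/
theorem fundamental_exact_sequence
    (φ : PowerSeries ℤ_[p] →+* PowerSeries ℤ_[p]) (hφ : IsFrobenius p φ)
    (ψ : PowerSeries ℤ_[p] → PowerSeries ℤ_[p]) (hψ : IsPsi p φ ψ) :
    -- constants lie in `ℤ_p[[T]]^{ψ=id}` and the inclusion is injective
    (∀ a : ℤ_[p], ψ (PowerSeries.C a) = PowerSeries.C a) ∧
    (∀ a b : ℤ_[p], PowerSeries.C a = PowerSeries.C b → a = b) ∧
    -- `1 - φ` maps `ℤ_p[[T]]^{ψ=id}` into `ℤ_p[[T]]^{ψ=0}`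
    (∀ f : PowerSeries ℤ_[p], ψ f = f → ψ (f - φ f) = 0) ∧
    -- exactness at `ℤ_p[[T]]^{ψ=id}`: the kernel of `1 - φ` is the constants
    (∀ f : PowerSeries ℤ_[p], ψ f = f →
      (f - φ f = 0 ↔ ∃ a : ℤ_[p], f = PowerSeries.C a)) ∧
    -- exactness at `ℤ_p[[T]]^{ψ=0}`: the image of `1 - φ` is the kernel of evaluation at `0`
    (∀ g : PowerSeries ℤ_[p], ψ g = 0 →
      (PowerSeries.constantCoeff g = 0 ↔
        ∃ f : PowerSeries ℤ_[p], ψ f = f ∧ f - φ f = g)) ∧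
    -- surjectivity of evaluation at `0` on `ℤ_p[[T]]^{ψ=0}`
    (∀ a : ℤ_[p], ∃ g : PowerSeries ℤ_[p],
      ψ g = 0 ∧ PowerSeries.constantCoeff g = a) := by
  have hψC (a : ℤ_[p]) : ψ (C a) = C a := by
    simpa only [hφ.map_C] using hψ.apply_phi hφ (C a)
  refine ⟨hψC, fun a b h => C_injective h, fun f hf => ?_, fun f _ => ?_, fun g hg => ?_,
    fun a => ⟨C a * (1 + X), hψ.apply_C_mul_one_add_X hφ a, by simp⟩⟩
  · rw [hψ.map_sub, hψ.apply_phi hφ, hf, sub_self]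
  · refine ⟨fun h => ⟨_, hφ.eq_C_of_apply_eq (sub_eq_zero.1 h).symm⟩, ?_⟩
    rintro ⟨a, rfl⟩
    rw [hφ.map_C, sub_self]
  · refine ⟨fun hg0 => ?_, ?_⟩
    · obtain ⟨f, rfl⟩ := hφ.exists_sub_apply_eq hg0
      exact ⟨f, by rwa [hψ.map_sub, hψ.apply_phi hφ, sub_eq_zero] at hg, rfl⟩
    · rintro ⟨f, -, rfl⟩
      rw [map_sub, hφ.constantCoeff_apply, sub_self]
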